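/- Consequently, for every α > 2 there exists ε₀ > 0 such that for all 0 < ε < ε₀ and all t ∈ ℝ, the point φ⁻¹(ε + it) lies in the Stolz region S(φ⁻¹(it), α) = {z ∈ 𝔻 : |z − φ⁻¹(it)| < α(1 − |z|)}. -/

import Mathlib

/-- The inverse Cayley transform. -/
noncomputable def cayleyInv (w : ℂ) : ℂ := (w - 1) / (w + 1)

/-! For `w = ε + it` and `v = it` one has `φ⁻¹ w - φ⁻¹ v = 2ε / ((w + 1)(v + 1))` and
`1 - |φ⁻¹ w| = 4ε / (|w + 1| (|w + 1| + |w - 1|))`, since `|w + 1|² - |w - 1|² = 4 Re w`.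
Hence the Stolz ratio is `(|w + 1| + |w - 1|) / (2 |v + 1|)`, which the triangle inequality,
together with `|v - 1| = |v + 1| ≥ 1`, bounds by `1 + ε`; this is below `α` once `ε < α - 1`. -/

open Complex

lemma norm_cayleyInv (w : ℂ) : ‖cayleyInv w‖ = ‖w - 1‖ / ‖w + 1‖ := norm_div _ _

lemma add_one_ne_zero_of_re_nonneg {w : ℂ} (hw : 0 ≤ w.re) : w + 1 ≠ 0 := by
  intro h
  have := congrArg Complex.re h
  simp only [add_re, one_re, zero_re] at this
  linarith

lemma sq_norm_add_one_sub_sq_norm_sub_one (w : ℂ) :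
    ‖w + 1‖ ^ 2 - ‖w - 1‖ ^ 2 = 4 * w.re := by
  simp only [Complex.sq_norm, Complex.normSq_apply, add_re, add_im, sub_re, sub_im, one_re,
    one_im]
  ring

lemma norm_sub_one_lt_norm_add_one {w : ℂ} (hw : 0 < w.re) : ‖w - 1‖ < ‖w + 1‖ := by
  have := sq_norm_add_one_sub_sq_norm_sub_one w
  exact lt_of_pow_lt_pow_left₀ 2 (norm_nonneg _) (by linarith)

lemma norm_cayleyInv_lt_one {w : ℂ} (hw : 0 < w.re) : ‖cayleyInv w‖ < 1 := by
  rw [norm_cayleyInv, div_lt_one (norm_pos_iff.2 (add_one_ne_zero_of_re_nonneg hw.le))]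
  exact norm_sub_one_lt_norm_add_one hw

lemma one_sub_norm_cayleyInv {w : ℂ} (hw : 0 < w.re) :
    1 - ‖cayleyInv w‖ = 4 * w.re / (‖w + 1‖ * (‖w + 1‖ + ‖w - 1‖)) := by
  have hA : 0 < ‖w + 1‖ := norm_pos_iff.2 (add_one_ne_zero_of_re_nonneg hw.le)
  have hAB : 0 < ‖w + 1‖ + ‖w - 1‖ := by positivity
  rw [norm_cayleyInv, ← sq_norm_add_one_sub_sq_norm_sub_one]
  field_simp
  ring

lemma cayleyInv_sub_cayleyInv {w v : ℂ} (hw : w + 1 ≠ 0) (hv : v + 1 ≠ 0) :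
    cayleyInv w - cayleyInv v = 2 * (w - v) / ((w + 1) * (v + 1)) := by
  rw [cayleyInv, cayleyInv, div_sub_div _ _ hw hv]
  ring

lemma norm_cayleyInv_add_sub_cayleyInv {v : ℂ} (hv : v.re = 0) {ε : ℝ} (hε : 0 < ε) :
    ‖cayleyInv (ε + v) - cayleyInv v‖ =
      (‖ε + v + 1‖ + ‖ε + v - 1‖) / (2 * ‖v + 1‖) * (1 - ‖cayleyInv (ε + v)‖) := by
  have hre : (ε + v).re = ε := by simp [hv]
  have hwre : 0 < (ε + v).re := hre.symm ▸ hε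
  have hw := add_one_ne_zero_of_re_nonneg hwre.le
  have hv1 := add_one_ne_zero_of_re_nonneg hv.ge
  have hA : 0 < ‖(ε : ℂ) + v + 1‖ := norm_pos_iff.2 hw
  have hC : 0 < ‖v + 1‖ := norm_pos_iff.2 hv1
  rw [one_sub_norm_cayleyInv hwre, hre, cayleyInv_sub_cayleyInv hw hv1, add_sub_cancel_right,
    norm_div, norm_mul, norm_mul, norm_real, Real.norm_of_nonneg hε.le, Complex.norm_two]
  field_simp
  ring

lemma norm_add_add_one_add_norm_add_sub_one_le {v : ℂ} (hv : v.re = 0) {ε : ℝ} (hε : 0 ≤ ε) :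
    (‖ε + v + 1‖ + ‖ε + v - 1‖) / (2 * ‖v + 1‖) ≤ 1 + ε := by
  have hsym : ‖v - 1‖ = ‖v + 1‖ := by
    refine (sq_eq_sq₀ (norm_nonneg _) (norm_nonneg _)).1 ?_
    simp only [Complex.sq_norm, Complex.normSq_apply, add_re, add_im, sub_re, sub_im, one_re,
      one_im, hv]
    ring
  have hC : 1 ≤ ‖v + 1‖ := by
    simpa [hv] using Complex.abs_re_le_norm (v + 1)
  have h1 : ‖(ε : ℂ) + v + 1‖ ≤ ε + ‖v + 1‖ := by
    simpa [add_assoc, Real.norm_of_nonneg hε] using norm_add_le (ε : ℂ) (v + 1)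
  have h2 : ‖(ε : ℂ) + v - 1‖ ≤ ε + ‖v - 1‖ := by
    simpa [add_sub_assoc, Real.norm_of_nonneg hε] using norm_add_le (ε : ℂ) (v - 1)
  rw [div_le_iff₀ (by positivity)]
  nlinarith

/-- For every `α > 2` there is `ε₀ > 0` such that for all `0 < ε < ε₀` and all real `t`,
the point `cayleyInv (ε + it)` lies in the Stolz region `S(cayleyInv (it), α)`. -/
theorem cayleyInv_mem_stolz (α : ℝ) (hα : 2 < α) :
    ∃ ε₀ : ℝ, 0 < ε₀ ∧ ∀ ε : ℝ, 0 < ε → ε < ε₀ → ∀ t : ℝ,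
      ‖cayleyInv (ε + t * Complex.I)‖ < 1 ∧
      ‖cayleyInv (ε + t * Complex.I) - cayleyInv (t * Complex.I)‖ <
        α * (1 - ‖cayleyInv (ε + t * Complex.I)‖) := by
  refine ⟨α - 1, by linarith, fun ε hε hεα t => ?_⟩
  have hv : ((t : ℂ) * I).re = 0 := by simp
  have hw : 0 < ((ε : ℂ) + t * I).re := by simpa using hε
  have hnorm := norm_cayleyInv_lt_one hw
  refine ⟨hnorm, ?_⟩
  rw [norm_cayleyInv_add_sub_cayleyInv hv hε]
  exact mul_lt_mul_of_pos_right
    ((norm_add_add_one_add_norm_add_sub_one_le hv hε.le).trans_lt (by linarith))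
    (sub_pos.2 hnorm)
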